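/- Let I be a finite set and (E_i)_{i∈I} a family of finite sets; equip the space ℝ^{E} of real functions on E = Π_{i∈I} E_i with the inner product ⟨f, g⟩ = Σ_{x∈E} f(x)g(x). For a ⊆ I let V_a be the factor subspace of functions depending only on the coordinates in a, and define S_a := V_a ∩ (Σ_{b⊊a} V_b)^⊥. Then for every a ⊆ I, the family (S_b)_{b⊆a} is pairwise orthogonal and V_a = ⊕_{b⊆a} S_b (an orthogonal internal direct sum). -/

import Mathlib

open Submodule

variable {I : Type*} [Fintype I] [DecidableEq I] {Ei : I → Type*} [∀ i, Fintype (Ei i)]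

/-- The factor subspace `V_a` of functions on `E = Π i, E_i` (with the standard inner
product `⟨f, g⟩ = Σ_x f x * g x`, i.e. in `EuclideanSpace ℝ (Π i, E_i)`) which depend
only on the coordinates in `a`. -/
def factorSub (a : Set I) : Submodule ℝ (EuclideanSpace ℝ (∀ i, Ei i)) where
  carrier := {f | ∀ x y : (∀ i, Ei i), (∀ i ∈ a, x i = y i) → f x = f y}
  add_mem' := by
    intro f g hf hg x y h
    simp only [PiLp.add_apply, hf x y h, hg x y h]
  zero_mem' := by intro x y h; rfl
  smul_mem' := by
    intro c f hf x y h
    simp only [PiLp.smul_apply, hf x y h]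

/-- The interaction subspace `S_a = V_a ∩ (Σ_{b ⊊ a} V_b)^⊥`. -/
noncomputable def interactionSub (a : Set I) : Submodule ℝ (EuclideanSpace ℝ (∀ i, Ei i)) :=
  factorSub a ⊓ (⨆ b ∈ {b : Set I | b ⊂ a}, (factorSub b : Submodule ℝ (EuclideanSpace ℝ (∀ i, Ei i))))ᗮ

/-!
Let `condAvg b` be the conditional expectation onto `V_b` for the uniform measure on `E`.
It maps `V_c` into `V_{b ∩ c}`, and `⟪condAvg c u, v⟫ = ⟪u, v⟫` for `v ∈ V_c`. Hence if
`c ⊄ b`, `u ∈ V_b` and `v ∈ S_c`, then `⟪u, v⟫ = ⟪condAvg c u, v⟫ = 0`, because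
`condAvg c u ∈ V_{b ∩ c}` and `b ∩ c ⊊ c`. For the decomposition, induct on `a` along `⊂`:
with `W = Σ_{b ⊊ a} V_b` we have `V_a = W ⊕ (V_a ∩ Wᗮ) = W ⊕ S_a`, and by induction
`W = Σ_{b ⊊ a} S_b`.
-/
theorem factorSub_mono {ι : Type*} {E : ι → Type*} :
    Monotone (factorSub : Set ι → Submodule ℝ (EuclideanSpace ℝ (∀ i, E i))) :=
  fun _ _ h _ hf x y hxy => hf x y fun i hi => hxy i (h hi)

theorem Set.involutive_piecewise_swap {ι : Type*} {β : ι → Type*} (s : Set ι)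
    [∀ i, Decidable (i ∈ s)] :
    Function.Involutive fun p : (∀ i, β i) × (∀ i, β i) =>
      (s.piecewise p.1 p.2, s.piecewise p.2 p.1) := by
  intro p
  ext i <;> by_cases hi : i ∈ s <;> simp [hi]

open Classical in
noncomputable def condAvg (b : Set I) (v : EuclideanSpace ℝ (∀ i, Ei i)) :
    EuclideanSpace ℝ (∀ i, Ei i) :=
  WithLp.toLp 2 fun x => (Fintype.card (∀ i, Ei i) : ℝ)⁻¹ * ∑ z, v (b.piecewise x z)

open Classical in
theorem condAvg_apply (b : Set I) (v : EuclideanSpace ℝ (∀ i, Ei i)) (x : ∀ i, Ei i) :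
    condAvg b v x = (Fintype.card (∀ i, Ei i) : ℝ)⁻¹ * ∑ z, v (b.piecewise x z) :=
  rfl

section

variable {b c : Set I} {v g : EuclideanSpace ℝ (∀ i, Ei i)}

theorem interactionSub_le_factorSub (a : Set I) :
    (interactionSub a : Submodule ℝ (EuclideanSpace ℝ (∀ i, Ei i))) ≤ factorSub a :=
  inf_le_left

theorem condAvg_mem_factorSub_inter (b : Set I) (hv : v ∈ factorSub c) :
    condAvg b v ∈ factorSub (b ∩ c) := by
  classical
  intro x y hxy
  rw [condAvg_apply, condAvg_apply]
  refine congrArg (HMul.hMul _) (Finset.sum_congr rfl fun z _ => hv _ _ fun i hi => ?_)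
  by_cases hib : i ∈ b
  · simp [Set.piecewise_eq_of_mem _ _ _ hib, hxy i ⟨hib, hi⟩]
  · simp [Set.piecewise_eq_of_notMem _ _ _ hib]

theorem inner_condAvg_of_mem_factorSub (v : EuclideanSpace ℝ (∀ i, Ei i))
    (hg : g ∈ factorSub b) : inner ℝ (condAvg b v) g = inner ℝ v g := by
  classical
  set N := (Fintype.card (∀ i, Ei i) : ℝ)
  have hg_piecewise : ∀ x z, g (b.piecewise x z) = g x := fun x z =>
    hg _ _ fun i hi => Set.piecewise_eq_of_mem _ _ _ hi
  rcases isEmpty_or_nonempty (∀ i, Ei i) with hE | hE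
  · simp [PiLp.inner_apply]
  have hN : N ≠ 0 := by positivity
  simp only [PiLp.inner_apply, RCLike.inner_apply, conj_trivial]
  let swap := (Set.involutive_piecewise_swap (β := Ei) b).toPerm
  calc ∑ x, g x * condAvg b v x
      = N⁻¹ * ∑ p : (∀ i, Ei i) × (∀ i, Ei i),
          g (b.piecewise p.1 p.2) * v (b.piecewise p.1 p.2) := by
        simp only [condAvg_apply, Fintype.sum_prod_type, hg_piecewise, Finset.mul_sum]
        exact Finset.sum_congr rfl fun _ _ => Finset.sum_congr rfl fun _ _ => mul_left_comm _ _ _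
    _ = N⁻¹ * ∑ p : (∀ i, Ei i) × (∀ i, Ei i), g p.1 * v p.1 :=
        congrArg (HMul.hMul _) (Equiv.sum_comp swap fun p => g p.1 * v p.1)
    _ = ∑ x, g x * v x := by
        rw [Fintype.sum_prod_type]
        simp only [Finset.sum_const, Finset.card_univ, nsmul_eq_mul, ← Finset.mul_sum]
        exact inv_mul_cancel_left₀ hN _

theorem factorSub_isOrtho_interactionSub (hcb : ¬ c ⊆ b) :
    (factorSub b : Submodule ℝ (EuclideanSpace ℝ (∀ i, Ei i))) ⟂ interactionSub c := by
  refine Submodule.isOrtho_iff_inner_eq.mpr fun u hu v hv => ?_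
  have hlt : c ∩ b ⊂ c :=
    Set.inter_subset_left.ssubset_of_ne fun h => hcb (h ▸ Set.inter_subset_right)
  have hproj : condAvg c u ∈ ⨆ d ∈ {d : Set I | d ⊂ c}, factorSub d :=
    mem_iSup_of_mem (c ∩ b) (mem_iSup_of_mem hlt (condAvg_mem_factorSub_inter c hu))
  calc inner ℝ u v = inner ℝ (condAvg c u) v := (inner_condAvg_of_mem_factorSub u hv.1).symm
    _ = 0 := (Submodule.mem_orthogonal _ v).mp hv.2 _ hproj

theorem interactionSub_isOrtho (hbc : b ≠ c) :
    (interactionSub b : Submodule ℝ (EuclideanSpace ℝ (∀ i, Ei i))) ⟂ interactionSub c := by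
  by_cases hcb : c ⊆ b
  · have hbc : ¬ b ⊆ c := fun h => hbc (h.antisymm hcb)
    exact ((factorSub_isOrtho_interactionSub hbc).mono_left (interactionSub_le_factorSub c)).symm
  · exact (factorSub_isOrtho_interactionSub hcb).mono_left (interactionSub_le_factorSub b)

theorem iSup_interactionSub_eq_factorSub (a : Set I) :
    ⨆ b ∈ {b : Set I | b ⊆ a}, interactionSub b =
      (factorSub a : Submodule ℝ (EuclideanSpace ℝ (∀ i, Ei i))) := by
  induction a using WellFoundedLT.induction with
  | _ a ih =>
  set W : Submodule ℝ (EuclideanSpace ℝ (∀ i, Ei i)) :=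
    ⨆ b ∈ {b : Set I | b ⊂ a}, factorSub b
  have hW : W = ⨆ b ∈ {b : Set I | b ⊂ a}, interactionSub b :=
    le_antisymm
      (iSup₂_le fun b hb => (ih b hb).symm ▸ iSup₂_le fun c hc =>
        le_iSup₂_of_le c (Set.ssubset_of_subset_of_ssubset hc hb) le_rfl)
      (iSup₂_mono fun b _ => interactionSub_le_factorSub b)
  calc ⨆ b ∈ {b : Set I | b ⊆ a}, interactionSub b
      = (⨆ b ∈ {b : Set I | b ⊂ a}, interactionSub b) ⊔ interactionSub a :=
        biSup_le_eq_sup _ a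
    _ = W ⊔ (Wᗮ ⊓ factorSub a) := by rw [← hW, inf_comm]; rfl
    _ = factorSub a := Submodule.sup_orthogonal_inf_of_hasOrthogonalProjection
        (iSup₂_le fun b hb => factorSub_mono hb.subset)

end

/-- For every `a ⊆ I`, the interaction subspaces `(S_b)_{b ⊆ a}` are
pairwise orthogonal and `V_a = ⊕_{b ⊆ a} S_b` is an orthogonal internal direct sum. -/
theorem factorSub_eq_iSup_interactionSub (a : Set I) :
    (∀ b c : Set I, b ⊆ a → c ⊆ a → b ≠ c →
      ∀ u ∈ (interactionSub b : Submodule ℝ (EuclideanSpace ℝ (∀ i, Ei i))),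
      ∀ v ∈ (interactionSub c : Submodule ℝ (EuclideanSpace ℝ (∀ i, Ei i))),
        (inner ℝ u v : ℝ) = 0) ∧
    (factorSub a : Submodule ℝ (EuclideanSpace ℝ (∀ i, Ei i))) =
      ⨆ b ∈ {b : Set I | b ⊆ a}, (interactionSub b : Submodule ℝ (EuclideanSpace ℝ (∀ i, Ei i))) :=
  ⟨fun _ _ _ _ hbc => Submodule.isOrtho_iff_inner_eq.mp (interactionSub_isOrtho hbc),
    (iSup_interactionSub_eq_factorSub a).symm⟩
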